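/- arXiv:1412.6156 — 6 statements merged into one kernel-verified Lean document; each statement's English description precedes it below -/
import Mathlib

section
/- For positive reals a > b > 0, with τ* = (a-b)/(log a - log b), the quantity f(a,b) := a - τ* log(e·a/τ*) satisfies f(a,b) ≥ 0, with equality if and only if a = b (vacuous here since a > b, so f(a,b) > 0). -/
/-! With `x = a / τ`, the quantity is `a - τ (1 + log x) = τ (x - 1 - log x)`, which is positive
as soon as `τ > 0` and `x ≠ 1`, by the strict inequality `log x < x - 1`. For the logarithmic mean
`τ = (a - b) / (log a - log b)` both conditions hold: `τ < a` is `log (b / a) < b / a - 1`. -/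

open Real

noncomputable def logMean (a b : ℝ) : ℝ := (a - b) / (log a - log b)

lemma logMean_pos {a b : ℝ} (hb : 0 < b) (hab : b < a) : 0 < logMean a b :=
  div_pos (sub_pos.mpr hab) (sub_pos.mpr (log_lt_log hb hab))

lemma logMean_lt_left {a b : ℝ} (hb : 0 < b) (hab : b < a) : logMean a b < a := by
  have ha : 0 < a := hb.trans hab
  have hlog : log b - log a < b / a - 1 := by
    rw [← log_div hb.ne' ha.ne']
    exact log_lt_sub_one_of_pos (div_pos hb ha) (div_lt_one ha |>.mpr hab).ne
  rw [logMean, div_lt_iff₀ (sub_pos.mpr (log_lt_log hb hab))]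
  have := mul_lt_mul_of_pos_left hlog ha
  rw [mul_sub_one, mul_div_cancel₀ _ ha.ne'] at this
  linarith

lemma sub_mul_log_exp_one_mul_div_pos {a τ : ℝ} (ha : 0 < a) (hτ : 0 < τ) (hτa : τ ≠ a) :
    0 < a - τ * log (exp 1 * a / τ) := by
  set x := a / τ
  have hx : 0 < x := div_pos ha hτ
  have hlog : log (exp 1 * a / τ) = 1 + log x := by
    rw [mul_div_assoc, log_mul (exp_pos 1).ne' hx.ne', log_exp]
  have hax : a = τ * x := (mul_div_cancel₀ a hτ.ne').symm
  have hx1 : log x < x - 1 :=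
    log_lt_sub_one_of_pos hx fun h => hτa ((div_eq_one_iff_eq hτ.ne').mp h).symm
  calc 0 < τ * (x - 1 - log x) := mul_pos hτ (by linarith)
    _ = a - τ * log (exp 1 * a / τ) := by rw [hlog, hax]; ring

theorem stmt2 (a b : ℝ) (hb : 0 < b) (hab : b < a)
    (τ : ℝ) (hτ : τ = (a - b) / (Real.log a - Real.log b)) :
    0 < a - τ * Real.log (Real.exp 1 * a / τ) := by
  subst hτ
  exact sub_mul_log_exp_one_mul_div_pos (hb.trans hab) (logMean_pos hb hab)
    (logMean_lt_left hb hab).ne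
end

section
/- Let A be a real symmetric n×n matrix, σ* ∈ {-1,1}^n with Σᵢ σ*ᵢ = 0, and Y* = σ*(σ*)ᵀ. Suppose there exist a diagonal matrix D* and λ* ∈ ℝ such that S* := D* - A + λ*J (J the all-ones matrix) is positive semidefinite, has second smallest eigenvalue strictly positive, and S*σ* = 0. Then Y* is the unique maximizer of ⟨A, Y⟩ over all symmetric positive semidefinite matrices Y with Yᵢᵢ = 1 for all i and ⟨J, Y⟩ = 0. -/
/-!
The certificate `S = D - A + λJ` gives, for every feasible `Y`, the identity
`⟨A, Y⟩ = tr D - ⟨S, Y⟩`. Since `Sσ = 0`, this is `tr D` at `Y = σσᵀ`, while for every feasible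
`Y` we have `⟨S, Y⟩ = tr (S Y) ≥ 0` because both matrices are positive semidefinite. Equality
forces `tr (S Y) = 0`, hence `S Y = 0`: every column of `Y` lies in `ker S`, which is spanned by
`σ` because `S` is positive definite on `σ^⊥`. Together with `Yᵢᵢ = 1` this pins down `Y = σσᵀ`.
-/

open Matrix
open scoped MatrixOrder ComplexOrder

namespace Matrix

section PosSemidef

variable {n 𝕜 : Type*} [Fintype n] [RCLike 𝕜]

lemma trace_conjTranspose_mul_self_mul_conjTranspose_mul_self (X Z : Matrix n n 𝕜) :
    (Xᴴ * X * (Zᴴ * Z)).trace = (X * Zᴴ * (X * Zᴴ)ᴴ).trace := by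
  rw [conjTranspose_mul, conjTranspose_conjTranspose, Matrix.mul_assoc, trace_mul_comm]
  simp only [Matrix.mul_assoc]

lemma PosSemidef.trace_mul_nonneg {A B : Matrix n n 𝕜} (hA : A.PosSemidef) (hB : B.PosSemidef) :
    0 ≤ (A * B).trace := by
  classical
  obtain ⟨X, rfl⟩ := CStarAlgebra.nonneg_iff_eq_star_mul_self.mp hA.nonneg
  obtain ⟨Z, rfl⟩ := CStarAlgebra.nonneg_iff_eq_star_mul_self.mp hB.nonneg
  rw [star_eq_conjTranspose, star_eq_conjTranspose,
    trace_conjTranspose_mul_self_mul_conjTranspose_mul_self]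
  exact (posSemidef_self_mul_conjTranspose _).trace_nonneg

lemma PosSemidef.trace_mul_eq_zero_iff {A B : Matrix n n 𝕜} (hA : A.PosSemidef)
    (hB : B.PosSemidef) : (A * B).trace = 0 ↔ A * B = 0 := by
  classical
  refine ⟨fun h => ?_, fun h => by rw [h, trace_zero]⟩
  obtain ⟨X, rfl⟩ := CStarAlgebra.nonneg_iff_eq_star_mul_self.mp hA.nonneg
  obtain ⟨Z, rfl⟩ := CStarAlgebra.nonneg_iff_eq_star_mul_self.mp hB.nonneg
  rw [star_eq_conjTranspose, star_eq_conjTranspose,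
    trace_conjTranspose_mul_self_mul_conjTranspose_mul_self,
    trace_mul_conjTranspose_self_eq_zero_iff] at h
  rw [star_eq_conjTranspose, star_eq_conjTranspose, Matrix.mul_assoc, ← Matrix.mul_assoc X, h,
    Matrix.zero_mul, Matrix.mul_zero]

end PosSemidef

variable {ι R : Type*} [Fintype ι]

lemma sum_sum_mul_eq_trace_mul [CommSemiring R] (M : Matrix ι ι R) {Z : Matrix ι ι R}
    (hZ : Z.IsSymm) : ∑ i, ∑ j, M i j * Z i j = (M * Z).trace := by
  simp only [trace, diag_apply, mul_apply, hZ.apply]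

def dualSlack [CommRing R] [DecidableEq ι] (d : ι → R) (A : Matrix ι ι R) (lam : R) :
    Matrix ι ι R :=
  diagonal d - A + lam • of fun _ _ => 1

lemma sum_sum_mul_add_sum_sum_dualSlack_mul [CommRing R] [DecidableEq ι] (d : ι → R)
    (A : Matrix ι ι R) (lam : R) {Z : Matrix ι ι R} (hdiag : ∀ i, Z i i = 1)
    (hZ : ∑ i, ∑ j, Z i j = 0) :
    ∑ i, ∑ j, A i j * Z i j + ∑ i, ∑ j, dualSlack d A lam i j * Z i j = ∑ i, d i := by
  have hJ : ∑ i, ∑ j, lam * Z i j = 0 := by simp only [← Finset.mul_sum, hZ, mul_zero]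
  simp only [dualSlack, add_apply, sub_apply, smul_apply, of_apply, diagonal_apply, smul_eq_mul,
    mul_one, add_mul, sub_mul, ite_mul, zero_mul, Finset.sum_add_distrib, Finset.sum_sub_distrib,
    Finset.sum_ite_eq, Finset.mem_univ, if_true, hdiag, hJ]
  ring

lemma exists_eq_smul_of_mulVec_eq_zero [Field R] [LinearOrder R] [IsStrictOrderedRing R]
    {S : Matrix ι ι R} {σ y : ι → R} (hσ : S *ᵥ σ = 0)
    (hpos : ∀ x, x ⬝ᵥ σ = 0 → x ≠ 0 → 0 < x ⬝ᵥ (S *ᵥ x)) (hy : S *ᵥ y = 0) :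
    ∃ c : R, y = c • σ := by
  set c := (y ⬝ᵥ σ) / (σ ⬝ᵥ σ)
  refine ⟨c, sub_eq_zero.mp ?_⟩
  by_contra hx
  have horth : (y - c • σ) ⬝ᵥ σ = 0 := by
    rcases eq_or_ne σ 0 with rfl | hσ0
    · simp
    · have : σ ⬝ᵥ σ ≠ 0 := fun h => hσ0 (dotProduct_self_eq_zero.mp h)
      rw [sub_dotProduct, smul_dotProduct, smul_eq_mul, div_mul_cancel₀ _ this, sub_self]
  have := hpos _ horth hx
  rw [mulVec_sub, mulVec_smul, hy, hσ, smul_zero, sub_zero, dotProduct_zero] at this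
  exact this.false

lemma eq_vecMulVec_of_mul_eq_zero [CommRing R] {S Y : Matrix ι ι R} {σ : ι → R}
    (hspan : ∀ y, S *ᵥ y = 0 → ∃ c : R, y = c • σ) (hσ : ∀ i, σ i * σ i = 1)
    (hdiag : ∀ i, Y i i = 1) (hSY : S * Y = 0) : Y = vecMulVec σ σ := by
  ext i j
  obtain ⟨c, hc⟩ := hspan (fun k => Y k j) (funext fun k => by
    simpa [mul_apply, mulVec, dotProduct] using congrFun (congrFun hSY k) j)
  have hcol : ∀ k, Y k j = c * σ k := fun k => by simpa using congrFun hc k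
  have hc : c = σ j :=
    calc c = c * σ j * σ j := by rw [mul_assoc, hσ, mul_one]
      _ = σ j := by rw [← hcol, hdiag, one_mul]
  rw [vecMulVec_apply, hcol, hc, mul_comm]

end Matrix

theorem stmt4_general (n : ℕ) (A : Matrix (Fin n) (Fin n) ℝ)
    (σ : Fin n → ℝ) (hσ : ∀ i, σ i = 1 ∨ σ i = -1) (hsum : ∑ i, σ i = 0)
    (d : Fin n → ℝ) (lam : ℝ)
    (S : Matrix (Fin n) (Fin n) ℝ)
    (hS : S = Matrix.diagonal d - A + lam • (Matrix.of fun _ _ => (1 : ℝ)))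
    (hpsd : S.PosSemidef)
    (hker : S *ᵥ σ = 0)
    (hl2 : ∀ x : Fin n → ℝ, x ⬝ᵥ σ = 0 → x ≠ 0 → 0 < x ⬝ᵥ (S *ᵥ x)) :
    ∀ Y : Matrix (Fin n) (Fin n) ℝ, Y.PosSemidef → (∀ i, Y i i = 1) →
      (∑ i, ∑ j, Y i j) = 0 →
      (∑ i, ∑ j, A i j * Y i j) ≤ (∑ i, ∑ j, A i j * (σ i * σ j)) ∧
      ((∑ i, ∑ j, A i j * Y i j) = (∑ i, ∑ j, A i j * (σ i * σ j)) →
        Y = Matrix.of fun i j => σ i * σ j) := by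
  intro Y hY hdiag hsumY
  replace hS : S = dualSlack d A lam := hS
  have hσσ : ∀ i, σ i * σ i = 1 := fun i => by rcases hσ i with h | h <;> simp [h]
  have hYsymm : Y.IsSymm := (conjTranspose_eq_transpose_of_trivial Y).symm.trans hY.isHermitian
  have hvalY : ∑ i, ∑ j, A i j * Y i j + (S * Y).trace = ∑ i, d i := by
    rw [← sum_sum_mul_eq_trace_mul S hYsymm, hS]
    exact sum_sum_mul_add_sum_sum_dualSlack_mul d A lam hdiag hsumY
  have hvalσ : ∑ i, ∑ j, A i j * vecMulVec σ σ i j + (S * vecMulVec σ σ).trace = ∑ i, d i := by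
    rw [← sum_sum_mul_eq_trace_mul S (transpose_vecMulVec σ σ), hS]
    exact sum_sum_mul_add_sum_sum_dualSlack_mul d A lam hσσ
      (by simp only [vecMulVec_apply, ← Finset.sum_mul_sum, hsum, mul_zero])
  rw [mul_vecMulVec, hker, zero_vecMulVec, trace_zero, add_zero] at hvalσ
  simp only [vecMulVec_apply] at hvalσ
  have hgap := hpsd.trace_mul_nonneg hY
  refine ⟨by linarith, fun hopt => ?_⟩
  have hSY : S * Y = 0 := (hpsd.trace_mul_eq_zero_iff hY).mp (by linarith)
  exact eq_vecMulVec_of_mul_eq_zero (fun y hy => exists_eq_smul_of_mulVec_eq_zero hker hl2 hy)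
    hσσ hdiag hSY

theorem stmt4 (n : ℕ) (A : Matrix (Fin n) (Fin n) ℝ) (hA : A.IsSymm)
    (σ : Fin n → ℝ) (hσ : ∀ i, σ i = 1 ∨ σ i = -1) (hsum : ∑ i, σ i = 0)
    (d : Fin n → ℝ) (lam : ℝ)
    (S : Matrix (Fin n) (Fin n) ℝ)
    (hS : S = Matrix.diagonal d - A + lam • (Matrix.of fun _ _ => (1 : ℝ)))
    (hpsd : S.PosSemidef)
    (hker : S *ᵥ σ = 0)
    (hl2 : ∀ x : Fin n → ℝ, x ⬝ᵥ σ = 0 → x ≠ 0 → 0 < x ⬝ᵥ (S *ᵥ x)) :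
    ∀ Y : Matrix (Fin n) (Fin n) ℝ, Y.PosSemidef → (∀ i, Y i i = 1) →
      (∑ i, ∑ j, Y i j) = 0 →
      (∑ i, ∑ j, A i j * Y i j) ≤ (∑ i, ∑ j, A i j * (σ i * σ j)) ∧
      ((∑ i, ∑ j, A i j * Y i j) = (∑ i, ∑ j, A i j * (σ i * σ j)) →
        Y = Matrix.of fun i j => σ i * σ j) :=
  stmt4_general n A σ hσ hsum d lam S hS hpsd hker hl2
end

section
/- Let A and Ã be symmetric n×n matrices with entries in {0,1}, and let Y* be an n×n symmetric matrix with entries in [-1,1]. Suppose that for every (i,j), either Ãᵢⱼ = Aᵢⱼ, or (Ãᵢⱼ = 1, Aᵢⱼ = 0, Y*ᵢⱼ = 1), or (Ãᵢⱼ = 0, Aᵢⱼ = 1, Y*ᵢⱼ = -1) (monotone adversary). If Y* is the unique maximizer of ⟨A, Y⟩ over a feasible set 𝒞 of symmetric PSD matrices with unit diagonal containing Y*, then Y* is also the unique maximizer of ⟨Ã, Y⟩ over 𝒞. -/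
/-! The adversary only moves entries of `A` in the direction in which `Y*` already sits at the
boundary of `[-1, 1]`: it adds `+1` where `Y*ᵢⱼ = 1` and subtracts `1` where `Y*ᵢⱼ = -1`. Since
every feasible `Y` has entries in `[-1, 1]` (a PSD matrix with unit diagonal has `Yᵢⱼ² ≤ YᵢᵢYⱼⱼ`),
the change `⟨Ã - A, Y⟩` of the objective is largest at `Y*`, so the strict gap
`⟨A, Y⟩ < ⟨A, Y*⟩` survives. -/

theorem Matrix.PosSemidef.apply_sq_le_mul_diag {ι : Type*} {M : Matrix ι ι ℝ}
    (hM : M.PosSemidef) (i j : ι) : M i j ^ 2 ≤ M i i * M j j := by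
  have hdet := (hM.submatrix ![i, j]).det_nonneg
  have hsymm : M j i = M i j := hM.isHermitian.apply i j
  simp only [det_fin_two, submatrix_apply, Matrix.cons_val_zero, Matrix.cons_val_one, hsymm] at hdet
  linarith [sq (M i j)]

theorem Matrix.PosSemidef.abs_apply_le_one {ι : Type*} {M : Matrix ι ι ℝ}
    (hM : M.PosSemidef) (hdiag : ∀ i, M i i = 1) (i j : ι) : |M i j| ≤ 1 := by
  rw [← sq_le_one_iff_abs_le_one]
  simpa [hdiag] using hM.apply_sq_le_mul_diag i j

theorem sub_mul_le_sub_mul_of_monotone_change {a ã y y₀ : ℝ} (hy : |y| ≤ 1)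
    (h : ã = a ∨ (ã = 1 ∧ a = 0 ∧ y₀ = 1) ∨ (ã = 0 ∧ a = 1 ∧ y₀ = -1)) :
    (ã - a) * y ≤ (ã - a) * y₀ := by
  obtain ⟨hy_lower, hy_upper⟩ := abs_le.mp hy
  rcases h with rfl | ⟨rfl, rfl, rfl⟩ | ⟨rfl, rfl, rfl⟩ <;> linarith

theorem stmt6_general (n : ℕ) (A Atil Ystar : Matrix (Fin n) (Fin n) ℝ)
    (hmono : ∀ i j, Atil i j = A i j ∨ (Atil i j = 1 ∧ A i j = 0 ∧ Ystar i j = 1) ∨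
      (Atil i j = 0 ∧ A i j = 1 ∧ Ystar i j = -1))
    (C : Set (Matrix (Fin n) (Fin n) ℝ))
    (hC : ∀ Y ∈ C, Y.PosSemidef ∧ ∀ i, Y i i = 1)
    (hopt : ∀ Y ∈ C, Y ≠ Ystar →
      (∑ i, ∑ j, A i j * Y i j) < ∑ i, ∑ j, A i j * Ystar i j) :
    ∀ Y ∈ C, Y ≠ Ystar →
      (∑ i, ∑ j, Atil i j * Y i j) < ∑ i, ∑ j, Atil i j * Ystar i j := by
  intro Y hY hne
  obtain ⟨hpsd, hdiag⟩ := hC Y hY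
  have hgain : ∑ i, ∑ j, (Atil i j - A i j) * Y i j ≤
      ∑ i, ∑ j, (Atil i j - A i j) * Ystar i j :=
    Finset.sum_le_sum fun i _ ↦ Finset.sum_le_sum fun j _ ↦
      sub_mul_le_sub_mul_of_monotone_change (hpsd.abs_apply_le_one hdiag i j) (hmono i j)
  simp only [sub_mul, Finset.sum_sub_distrib] at hgain
  linarith [hopt Y hY hne]

theorem stmt6 (n : ℕ) (A Atil Ystar : Matrix (Fin n) (Fin n) ℝ)
    (hA : A.IsSymm) (hAtil : Atil.IsSymm)
    (hA01 : ∀ i j, A i j = 0 ∨ A i j = 1)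
    (hAtil01 : ∀ i j, Atil i j = 0 ∨ Atil i j = 1)
    (hYs : Ystar.IsSymm) (hYb : ∀ i j, |Ystar i j| ≤ 1)
    (hmono : ∀ i j, Atil i j = A i j ∨ (Atil i j = 1 ∧ A i j = 0 ∧ Ystar i j = 1) ∨
      (Atil i j = 0 ∧ A i j = 1 ∧ Ystar i j = -1))
    (C : Set (Matrix (Fin n) (Fin n) ℝ))
    (hC : ∀ Y ∈ C, Y.PosSemidef ∧ ∀ i, Y i i = 1)
    (hYin : Ystar ∈ C)
    (hopt : ∀ Y ∈ C, Y ≠ Ystar →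
      (∑ i, ∑ j, A i j * Y i j) < ∑ i, ∑ j, A i j * Ystar i j) :
    ∀ Y ∈ C, Y ≠ Ystar →
      (∑ i, ∑ j, Atil i j * Y i j) < ∑ i, ∑ j, Atil i j * Ystar i j :=
  stmt6_general n A Atil Ystar hmono C hC hopt
end

section
/- For integers 0 < k < n with λ = k/n, the binomial coefficient satisfies (√π/2)·(2πnλ(1-λ))^{-1/2}·exp(n·h(λ)) ≤ C(n,k) ≤ (2πnλ(1-λ))^{-1/2}·exp(n·h(λ)), where h(λ) = -λ log λ - (1-λ) log(1-λ). -/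
/-!
Write `n = k + m` and let `s j = j! / (√(2j) (j/e)^j)` be Mathlib's `stirlingSeq`, which decreases
to `√π`. Since `k + m = n`, the powers of `e` cancel in `n! / (k! m!)`, leaving the exact identity
`C(n,k) · √(2km/n) · s k · s m = s n · n^n / (k^k m^m)`, and `n^n / (k^k m^m) = exp (n h(λ))`.
The upper bound is then `√π · s n ≤ s k · s m`, which holds as `s n ≤ s k` and `√π ≤ s m`.
The lower bound is `s k · s m ≤ 2 · s n`: if `k` or `m` is at least `3`, then
`s k · s m ≤ s 1 · s 3 < 2√π ≤ 2 · s n`; the four cases `k, m ≤ 2` are checked by hand, and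
`k = m = 1` is a case of equality.
-/

open Real Stirling
open scoped Nat

namespace Stirling

theorem stirlingSeq_pos {n : ℕ} (hn : n ≠ 0) : 0 < stirlingSeq n := by
  obtain ⟨n, rfl⟩ := Nat.exists_eq_succ_of_ne_zero hn
  exact stirlingSeq'_pos n

theorem stirlingSeq_le_of_le {j n : ℕ} (hj : j ≠ 0) (hjn : j ≤ n) :
    stirlingSeq n ≤ stirlingSeq j := by
  obtain ⟨i, rfl⟩ := Nat.exists_eq_succ_of_ne_zero hj
  obtain ⟨l, rfl⟩ := Nat.exists_eq_add_of_le hjn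
  simpa [Nat.succ_add] using stirlingSeq'_antitone (Nat.le_add_right i l)

theorem stirlingSeq_one_mul_stirlingSeq_three_le : stirlingSeq 1 * stirlingSeq 3 ≤ 2 * √π := by
  have h6 : √6 = √2 * √3 := by rw [← sqrt_mul (by norm_num)]; norm_num
  have hval : stirlingSeq 1 * stirlingSeq 3 = exp 1 ^ 4 / (9 * √3) := by
    rw [stirlingSeq_one, stirlingSeq]
    norm_num [Nat.factorial, h6]
    field_simp
    rw [sq_sqrt (by norm_num), ← exp_nat_mul]
    norm_num
    ring
  have he : exp 1 ^ 4 < 2.7182818286 ^ 4 := by gcongr; exact exp_one_lt_d9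
  have hpi : (3.06 : ℝ) ≤ √(3 * π) := by
    rw [le_sqrt (by norm_num) (by positivity)]
    nlinarith [pi_gt_d2]
  rw [hval, div_le_iff₀ (by positivity)]
  calc exp 1 ^ 4 ≤ 18 * 3.06 := by linarith
    _ ≤ 18 * √(3 * π) := by gcongr
    _ = 2 * √π * (9 * √3) := by rw [sqrt_mul (by norm_num)]; ring

theorem stirlingSeq_mul_stirlingSeq_le_two_mul {k m : ℕ} (hk : k ≠ 0) (hm : 3 ≤ m) :
    stirlingSeq k * stirlingSeq m ≤ 2 * stirlingSeq (k + m) :=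
  calc stirlingSeq k * stirlingSeq m ≤ stirlingSeq 1 * stirlingSeq 3 :=
        mul_le_mul (stirlingSeq_le_of_le one_ne_zero (by omega))
          (stirlingSeq_le_of_le (by norm_num) hm) (stirlingSeq_pos (by omega)).le
          (stirlingSeq_pos one_ne_zero).le
    _ ≤ 2 * √π := stirlingSeq_one_mul_stirlingSeq_three_le
    _ ≤ 2 * stirlingSeq (k + m) := by gcongr; exact sqrt_pi_le_stirlingSeq (by omega)

theorem sqrt_pi_mul_stirlingSeq_add_le {k m : ℕ} (hk : k ≠ 0) (hm : m ≠ 0) :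
    √π * stirlingSeq (k + m) ≤ stirlingSeq k * stirlingSeq m := by
  rw [mul_comm]
  exact mul_le_mul (stirlingSeq_le_of_le hk (Nat.le_add_right k m)) (sqrt_pi_le_stirlingSeq hm)
    (sqrt_nonneg π) (stirlingSeq_pos hk).le

end Stirling

namespace Real

theorem mul_binEntropy_div_add {a b : ℝ} (ha : 0 < a) (hb : 0 < b) :
    (a + b) * binEntropy (a / (a + b)) = (a + b) * log (a + b) - a * log a - b * log b := by
  have hab : 0 < a + b := by positivity
  have h1 : 1 - a / (a + b) = b / (a + b) := by field_simp; ring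
  rw [binEntropy_eq_negMulLog_add_negMulLog_one_sub, h1, negMulLog, negMulLog,
    log_div ha.ne' hab.ne', log_div hb.ne' hab.ne']
  field_simp
  ring

theorem exp_mul_binEntropy_div_add {k m : ℕ} (hk : k ≠ 0) (hm : m ≠ 0) :
    exp ((k + m) * binEntropy (k / (k + m))) = (k + m : ℝ) ^ (k + m) / (k ^ k * m ^ m) := by
  rw [mul_binEntropy_div_add (by positivity) (by positivity),
    ← exp_log (by positivity : (0 : ℝ) < (k + m : ℝ) ^ (k + m) / (k ^ k * m ^ m)),
    log_div (by positivity) (by positivity), log_mul (by positivity) (by positivity)]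
  congr 1
  simp only [log_pow]
  push_cast
  ring

end Real

theorem add_choose_mul_sqrt_mul_stirlingSeq_mul_stirlingSeq {k m : ℕ} (hk : k ≠ 0) (hm : m ≠ 0) :
    ((k + m).choose k : ℝ) * √(2 * k * m / (k + m)) * (stirlingSeq k * stirlingSeq m) =
      stirlingSeq (k + m) * ((k + m : ℝ) ^ (k + m) / (k ^ k * m ^ m)) := by
  have hC : ((k + m).choose k : ℝ) * k ! * m ! = (k + m)! := by
    rw [Nat.choose_symm_add]
    exact_mod_cast Nat.add_choose_mul_factorial_mul_factorial k m
  have hsqrt : √(2 * k * m / (k + m)) * √(2 * (k + m)) = √(2 * k) * √(2 * m) := by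
    rw [← sqrt_mul (by positivity), ← sqrt_mul (by positivity)]
    congr 1
    field_simp
  simp only [stirlingSeq, div_pow]
  push_cast
  rw [← hC, pow_add (exp 1)]
  field_simp
  linear_combination ((k + m).choose k : ℝ) * hsqrt

theorem add_choose_lower_bound_of_le_two {k m : ℕ} (hk : 0 < k) (hm : 0 < m) (hk2 : k ≤ 2)
    (hm2 : m ≤ 2) :
    (k + m : ℝ) ^ (k + m) / (k ^ k * m ^ m) ≤
      2 * (((k + m).choose k : ℝ) * √(2 * k * m / (k + m))) := by
  have h3 : 9 / 8 ≤ 2 / √3 := by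
    rw [le_div_iff₀ (by positivity), ← le_div_iff₀' (by norm_num), sqrt_le_left (by norm_num)]
    norm_num
  have h2 : 4 / 3 ≤ √2 := by rw [le_sqrt (by norm_num) (by norm_num)]; norm_num
  interval_cases k <;> interval_cases m <;> norm_num [Nat.choose] <;> linarith

theorem add_choose_lower_bound {k m : ℕ} (hk : k ≠ 0) (hm : m ≠ 0) :
    (k + m : ℝ) ^ (k + m) / (k ^ k * m ^ m) ≤
      2 * (((k + m).choose k : ℝ) * √(2 * k * m / (k + m))) := by
  by_cases hsmall : k ≤ 2 ∧ m ≤ 2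
  · exact add_choose_lower_bound_of_le_two (by omega) (by omega) hsmall.1 hsmall.2
  have hs : stirlingSeq k * stirlingSeq m ≤ 2 * stirlingSeq (k + m) := by
    rcases not_and_or.mp hsmall with hk3 | hm3
    · rw [mul_comm, add_comm]
      exact stirlingSeq_mul_stirlingSeq_le_two_mul hm (by omega)
    · exact stirlingSeq_mul_stirlingSeq_le_two_mul hk (by omega)
  refine le_of_mul_le_mul_left ?_ (stirlingSeq_pos (by omega : k + m ≠ 0))
  rw [← add_choose_mul_sqrt_mul_stirlingSeq_mul_stirlingSeq hk hm]
  calc ((k + m).choose k : ℝ) * √(2 * k * m / (k + m)) * (stirlingSeq k * stirlingSeq m)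
      ≤ ((k + m).choose k : ℝ) * √(2 * k * m / (k + m)) * (2 * stirlingSeq (k + m)) := by
        gcongr
    _ = stirlingSeq (k + m) * (2 * (((k + m).choose k : ℝ) * √(2 * k * m / (k + m)))) := by
        ring

theorem add_choose_upper_bound {k m : ℕ} (hk : k ≠ 0) (hm : m ≠ 0) :
    √π * (((k + m).choose k : ℝ) * √(2 * k * m / (k + m))) ≤
      (k + m : ℝ) ^ (k + m) / (k ^ k * m ^ m) := by
  refine le_of_mul_le_mul_left ?_ (stirlingSeq_pos (by omega : k + m ≠ 0))
  rw [← add_choose_mul_sqrt_mul_stirlingSeq_mul_stirlingSeq hk hm]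
  calc stirlingSeq (k + m) * (√π * (((k + m).choose k : ℝ) * √(2 * k * m / (k + m))))
      = ((k + m).choose k : ℝ) * √(2 * k * m / (k + m)) * (√π * stirlingSeq (k + m)) := by
        ring
    _ ≤ ((k + m).choose k : ℝ) * √(2 * k * m / (k + m)) * (stirlingSeq k * stirlingSeq m) := by
        exact mul_le_mul_of_nonneg_left (sqrt_pi_mul_stirlingSeq_add_le hk hm) (by positivity)

theorem stmt12 (n k : ℕ) (hk : 0 < k) (hkn : k < n)
    (lam : ℝ) (hlam : lam = (k : ℝ) / n) :
    Real.sqrt Real.pi / 2 *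
      (Real.exp ((n : ℝ) * (-lam * Real.log lam - (1 - lam) * Real.log (1 - lam))) /
        Real.sqrt (2 * Real.pi * n * lam * (1 - lam))) ≤ (n.choose k : ℝ) ∧
    (n.choose k : ℝ) ≤
      Real.exp ((n : ℝ) * (-lam * Real.log lam - (1 - lam) * Real.log (1 - lam))) /
        Real.sqrt (2 * Real.pi * n * lam * (1 - lam)) := by
  obtain ⟨m, rfl⟩ : ∃ m, n = k + m := ⟨n - k, by omega⟩
  have hk0 : k ≠ 0 := hk.ne'
  have hm0 : m ≠ 0 := by omega
  have hentropy : -lam * log lam - (1 - lam) * log (1 - lam) = binEntropy lam := by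
    rw [binEntropy_eq_negMulLog_add_negMulLog_one_sub, negMulLog, negMulLog]
    ring
  have hvar : 2 * π * ((k + m : ℕ) : ℝ) * lam * (1 - lam) = π * (2 * k * m / (k + m)) := by
    rw [hlam]
    push_cast
    field_simp
    ring
  push_cast at hlam
  rw [hentropy, hvar, sqrt_mul pi_nonneg, hlam]
  push_cast
  rw [exp_mul_binEntropy_div_add hk0 hm0]
  have hlower := add_choose_lower_bound hk0 hm0
  have hupper := add_choose_upper_bound hk0 hm0
  set E : ℝ := (k + m : ℝ) ^ (k + m) / (k ^ k * m ^ m)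
  set q : ℝ := √(2 * k * m / (k + m))
  have hq : 0 < q := sqrt_pos.mpr (by positivity)
  have hpi : 0 < √π := sqrt_pos.mpr pi_pos
  constructor
  · rw [show √π / 2 * (E / (√π * q)) = E / (2 * q) by field_simp, div_le_iff₀ (by positivity)]
    linarith
  · rw [le_div_iff₀ (by positivity)]
    linarith
end

section
/- For integers 0 < k < n with λ = k/n and p ∈ (0,1) with λ > p, the binomial tail satisfies P(Binom(n,p) ≥ k) ≥ (8k(1-λ))^{-1/2}·exp(-n·d(λ‖p)), where d(λ‖p) = λ log(λ/p) + (1-λ) log((1-λ)/(1-p)). -/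
/-! The tail is at least its term at `k`, and with `j = n - k`,
`exp (-n d(λ‖p)) = p^k (1-p)^j · n^n / (k^k j^j)`, so it suffices that
`log C(n,k) ≥ n log n - k log k - j log j - log (8kj/n) / 2`. This follows from Stirling's formula
with explicit errors, `√(2πm) (m/e)^m ≤ m! ≤ √(2πm) (m/e)^m e^{1/(12m)}`, where the upper
bound comes from summing Robbins' bound `1/(12m(m+1))` on the decrease of `log stirlingSeq`.
The errors contribute `1/(12k) + 1/(12j) ≤ 1/9` once `n ≥ 4`, and the remaining constant
inequality is `π e^{2/9} ≤ 4`; the cases `n ≤ 3` are checked directly (`n = 2, k = 1` is an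
equality). -/

open Real Filter Topology
open scoped Nat

namespace Stirling

theorem log_stirlingSeq'_sub_monotone :
    Monotone fun m : ℕ => log (stirlingSeq (m + 1)) - 1 / 12 * (1 / ((m : ℝ) + 1)) := by
  refine monotone_nat_of_le_succ fun m => ?_
  have h := log_stirlingSeq_sdiff_le (m + 1)
  push_cast at h ⊢
  have : (1 : ℝ) / (12 * ((m : ℝ) + 1) * ((m : ℝ) + 1 + 1)) =
      1 / 12 * (1 / ((m : ℝ) + 1)) - 1 / 12 * (1 / ((m : ℝ) + 1 + 1)) := by field_simp; ring
  linarith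

theorem log_stirlingSeq_le {n : ℕ} (hn : n ≠ 0) :
    log (stirlingSeq n) ≤ log π / 2 + 1 / (12 * n) := by
  obtain ⟨m, rfl⟩ := Nat.exists_eq_succ_of_ne_zero hn
  have hlim : Tendsto (fun m : ℕ => log (stirlingSeq (m + 1)) - 1 / 12 * (1 / ((m : ℝ) + 1)))
      atTop (𝓝 (log √π - 1 / 12 * 0)) :=
    (((continuousAt_log (by positivity)).tendsto.comp tendsto_stirlingSeq_sqrt_pi).comp
      (tendsto_add_atTop_nat 1)).sub (tendsto_one_div_add_atTop_nhds_zero_nat.const_mul _)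
  have h := log_stirlingSeq'_sub_monotone.ge_of_tendsto hlim m
  rw [log_sqrt pi_pos.le] at h
  push_cast
  field_simp at h ⊢
  linarith

theorem log_factorial_le_stirling {n : ℕ} (hn : n ≠ 0) :
    log n ! ≤ n * log n - n + log n / 2 + log (2 * π) / 2 + 1 / (12 * n) := by
  have h := log_stirlingSeq_le hn
  have hn' : (0 : ℝ) < n := by positivity
  rw [log_stirlingSeq_formula, log_mul two_ne_zero hn'.ne', log_div hn'.ne' (exp_pos 1).ne',
    log_exp] at h
  rw [log_mul two_ne_zero pi_pos.ne']
  linarith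

end Stirling

open Stirling

theorem log_pi_add_two_ninths_le : log π + 2 / 9 ≤ 2 * log 2 := by
  have hexp : exp (2 / 9) ≤ 1 + 2 / 9 + (2 / 9) ^ 2 := by
    have := abs_exp_sub_one_sub_id_le (x := 2 / 9) (by norm_num [abs_of_pos])
    linarith [(abs_le.1 this).2]
  have h : π * exp (2 / 9) ≤ 2 ^ 2 := by
    nlinarith [pi_lt_d4, pi_pos, exp_pos (2 / 9)]
  have := log_le_log (by positivity) h
  rwa [log_mul pi_pos.ne' (exp_pos _).ne', log_exp, log_pow, Nat.cast_ofNat] at this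

theorem le_log_choose_add_of_four_le {k j : ℕ} (hk : k ≠ 0) (hj : j ≠ 0) (hkj : 4 ≤ k + j) :
    (k + j) * log (k + j) - k * log k - j * log j + log ((k + j) / (8 * k * j)) / 2 ≤
      log ((k + j).choose k) := by
  have hk' : (1 : ℝ) ≤ k := by exact_mod_cast Nat.one_le_iff_ne_zero.2 hk
  have hj' : (1 : ℝ) ≤ j := by exact_mod_cast Nat.one_le_iff_ne_zero.2 hj
  have hkj' : (4 : ℝ) ≤ k + j := by exact_mod_cast hkj
  have hfact : log (k + j : ℕ)! = log ((k + j).choose k) + log k ! + log j ! := by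
    have hC : ((k + j).choose j : ℝ) ≠ 0 := Nat.cast_ne_zero.2 (Nat.choose_pos (by omega)).ne'
    rw [Nat.choose_symm_add, ← Nat.add_choose_mul_factorial_mul_factorial, Nat.cast_mul,
      Nat.cast_mul, log_mul (by positivity) (by positivity), log_mul hC (by positivity)]
  have hlower := le_log_factorial_stirling (n := k + j) (by omega)
  have hupper_k := log_factorial_le_stirling hk
  have hupper_j := log_factorial_le_stirling hj
  have herr : 1 / (12 * (k : ℝ)) + 1 / (12 * j) ≤ 1 / 9 := by
    rw [div_add_div _ _ (by positivity) (by positivity),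
      div_le_div_iff₀ (by positivity) (by norm_num)]
    nlinarith [mul_nonneg (sub_nonneg.2 hk') (sub_nonneg.2 hj')]
  have hpi := log_pi_add_two_ninths_le
  have h8 : log (8 : ℝ) = 3 * log 2 := by
    rw [show (8 : ℝ) = 2 ^ 3 by norm_num, log_pow, Nat.cast_ofNat]
  push_cast at hlower
  rw [log_div (by positivity) (by positivity), log_mul (by positivity) (by positivity),
    log_mul (by positivity) (by positivity), h8]
  rw [log_mul two_ne_zero pi_pos.ne'] at hlower hupper_k hupper_j
  linarith

theorem le_log_choose_add {k j : ℕ} (hk : k ≠ 0) (hj : j ≠ 0) :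
    (k + j) * log (k + j) - k * log k - j * log j + log ((k + j) / (8 * k * j)) / 2 ≤
      log ((k + j).choose k) := by
  wlog hkj : k ≤ j generalizing k j
  · have h := this hj hk (by omega)
    rw [add_comm j k, ← Nat.choose_symm_add, add_comm (j : ℝ), mul_right_comm 8 (j : ℝ)] at h
    linarith
  by_cases h4 : 4 ≤ k + j
  · exact le_log_choose_add_of_four_le hk hj h4
  obtain rfl : k = 1 := by omega
  obtain rfl | rfl : j = 1 ∨ j = 2 := by omega
  · have h4 : log (1 / 4 : ℝ) = -(2 * log 2) := by
      rw [one_div, log_inv, show (4 : ℝ) = 2 ^ 2 by norm_num, log_pow, Nat.cast_ofNat]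
    norm_num [h4]
    linarith
  · have h16 : log (3 / 16 : ℝ) = log 3 - 4 * log 2 := by
      rw [log_div (by norm_num) (by norm_num), show (16 : ℝ) = 2 ^ 4 by norm_num, log_pow,
        Nat.cast_ofNat]
    have h : 5 * log 3 ≤ 8 * log (2 : ℝ) := by
      have := log_le_log (by norm_num) (show (3 : ℝ) ^ 5 ≤ 2 ^ 8 by norm_num)
      rwa [log_pow, log_pow, Nat.cast_ofNat, Nat.cast_ofNat] at this
    norm_num [h16]
    linarith

noncomputable def binaryKL (a p : ℝ) : ℝ := a * log (a / p) + (1 - a) * log ((1 - a) / (1 - p))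

theorem add_mul_binaryKL_div_add {a b p : ℝ} (ha : 0 < a) (hb : 0 < b) (hp : 0 < p)
    (hp1 : p < 1) :
    (a + b) * binaryKL (a / (a + b)) p =
      a * log a + b * log b - (a + b) * log (a + b) - a * log p - b * log (1 - p) := by
  have hab : 0 < a + b := by positivity
  have hb' : 1 - a / (a + b) = b / (a + b) := by field_simp; ring
  rw [binaryKL, hb', log_div (div_pos ha hab).ne' hp.ne',
    log_div (div_pos hb hab).ne' (sub_pos.2 hp1).ne', log_div ha.ne' hab.ne',
    log_div hb.ne' hab.ne']
  field_simp
  ring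

theorem exp_neg_binaryKL_div_sqrt_le {k j : ℕ} (hk : k ≠ 0) (hj : j ≠ 0) {p : ℝ}
    (hp : 0 < p) (hp1 : p < 1) :
    exp (-(k + j : ℝ) * binaryKL (k / (k + j)) p) / √(8 * k * (1 - k / (k + j))) ≤
      (k + j).choose k * p ^ k * (1 - p) ^ j := by
  have hk' : (0 : ℝ) < k := by exact_mod_cast Nat.pos_of_ne_zero hk
  have hj' : (0 : ℝ) < j := by exact_mod_cast Nat.pos_of_ne_zero hj
  have hkl := add_mul_binaryKL_div_add hk' hj' hp hp1
  have hchoose := le_log_choose_add hk hj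
  have hC : (0 : ℝ) < (k + j).choose k := Nat.cast_pos.2 (Nat.choose_pos (by omega))
  have hvar : 8 * k * (1 - k / (k + j : ℝ)) = ((k + j : ℝ) / (8 * k * j))⁻¹ := by
    field_simp; ring
  calc exp (-(k + j : ℝ) * binaryKL (k / (k + j)) p) / √(8 * k * (1 - k / (k + j)))
      = exp (-(k + j : ℝ) * binaryKL (k / (k + j)) p + log ((k + j) / (8 * k * j)) / 2) := by
        rw [hvar, sqrt_inv, div_inv_eq_mul, sqrt_eq_rpow, rpow_def_of_pos (by positivity),
          exp_add, mul_one_div]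
    _ ≤ exp (log ((k + j).choose k * p ^ k * (1 - p) ^ j)) := by
        rw [exp_le_exp, log_mul (by positivity) (by positivity),
          log_mul hC.ne' (by positivity), log_pow, log_pow]
        linarith
    _ = (k + j).choose k * p ^ k * (1 - p) ^ j := exp_log (by positivity)

theorem stmt13_general (n k : ℕ) (hk : 0 < k) (hkn : k < n) (p : ℝ) (hp : 0 < p) (hp1 : p < 1)
    (lam : ℝ) (hlam : lam = (k : ℝ) / n) :
    Real.exp (-(n : ℝ) * (lam * Real.log (lam / p)
        + (1 - lam) * Real.log ((1 - lam) / (1 - p)))) /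
      Real.sqrt (8 * k * (1 - lam)) ≤
    ∑ j ∈ Finset.Icc k n, (n.choose j : ℝ) * p ^ j * (1 - p) ^ (n - j) := by
  obtain ⟨j, rfl⟩ := Nat.exists_eq_add_of_le hkn.le
  push_cast at hlam ⊢
  subst hlam
  calc _ ≤ ((k + j).choose k : ℝ) * p ^ k * (1 - p) ^ j :=
        exp_neg_binaryKL_div_sqrt_le hk.ne' (by omega) hp hp1
    _ = ((k + j).choose k : ℝ) * p ^ k * (1 - p) ^ (k + j - k) := by rw [Nat.add_sub_cancel_left]
    _ ≤ _ := Finset.single_le_sum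
        (f := fun i => ((k + j).choose i : ℝ) * p ^ i * (1 - p) ^ (k + j - i))
        (fun i _ => by positivity) (Finset.left_mem_Icc.2 (Nat.le_add_right k j))

theorem stmt13 (n k : ℕ) (hk : 0 < k) (hkn : k < n) (p : ℝ) (hp : 0 < p) (hp1 : p < 1)
    (lam : ℝ) (hlam : lam = (k : ℝ) / n) (hplam : p < lam) :
    Real.exp (-(n : ℝ) * (lam * Real.log (lam / p)
        + (1 - lam) * Real.log ((1 - lam) / (1 - p)))) /
      Real.sqrt (8 * k * (1 - lam)) ≤
    ∑ j ∈ Finset.Icc k n, (n.choose j : ℝ) * p ^ j * (1 - p) ^ (n - j) :=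
  stmt13_general n k hk hkn p hp hp1 lam hlam
end

section
/- Let σ* ∈ {-1,1}^n with Σᵢ σ*ᵢ = 0, and suppose A = E + (p-q)/2·Y* + (p+q)/2·J - p·I where Y* = σ*(σ*)ᵀ, J is the all-ones matrix, I the identity, and E = A - E[A] is a symmetric perturbation. With dᵢ* = Σⱼ Aᵢⱼσ*ᵢσ*ⱼ, D* = diag(dᵢ*), λ* ≥ (p+q)/2, and S* = D* - A + λ*J: for every unit vector x with x ⊥ σ*, xᵀS*x ≥ minᵢ dᵢ* + p - ‖E‖, where ‖E‖ is the spectral norm. -/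
open Matrix BigOperators RealInnerProductSpace

namespace Matrix

variable {ι : Type*} [Fintype ι]

theorem dotProduct_mulVec_le_norm_toEuclideanCLM_mul [DecidableEq ι] (M : Matrix ι ι ℝ) (x : ι → ℝ) :
    x ⬝ᵥ (M *ᵥ x) ≤ ‖toEuclideanCLM (𝕜 := ℝ) M‖ * (x ⬝ᵥ x) := by
  set y : EuclideanSpace ℝ ι := WithLp.toLp 2 x
  have hyy : ‖y‖ ^ 2 = x ⬝ᵥ x := by
    rw [← real_inner_self_eq_norm_sq, ← Matrix.one_mulVec x, ← inner_toEuclideanCLM]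
    simp [y]
  calc x ⬝ᵥ (M *ᵥ x) = ⟪y, toEuclideanCLM (𝕜 := ℝ) M y⟫ := (inner_toEuclideanCLM M y y).symm
    _ ≤ ‖y‖ * ‖toEuclideanCLM (𝕜 := ℝ) M y‖ := real_inner_le_norm _ _
    _ ≤ ‖y‖ * (‖toEuclideanCLM (𝕜 := ℝ) M‖ * ‖y‖) := by gcongr; exact ContinuousLinearMap.le_opNorm _ _
    _ = ‖toEuclideanCLM (𝕜 := ℝ) M‖ * (x ⬝ᵥ x) := by rw [← hyy]; ring

theorem iInf_mul_le_dotProduct_diagonal_mulVec [DecidableEq ι] (d x : ι → ℝ) :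
    (⨅ i, d i) * (x ⬝ᵥ x) ≤ x ⬝ᵥ (diagonal d *ᵥ x) := by
  simp only [dotProduct, mulVec_diagonal, Finset.mul_sum]
  refine Finset.sum_le_sum fun i _ => ?_
  nlinarith [ciInf_le (Set.finite_range d).bddBelow i, mul_self_nonneg (x i)]

theorem dotProduct_vecMulVec_mulVec (u v x : ι → ℝ) :
    x ⬝ᵥ (vecMulVec u v *ᵥ x) = (x ⬝ᵥ u) * (v ⬝ᵥ x) := by
  rw [vecMulVec_mulVec, op_smul_eq_smul, dotProduct_smul, smul_eq_mul, mul_comm]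

theorem dotProduct_of_one_mulVec (x : ι → ℝ) :
    x ⬝ᵥ (of (fun _ _ => (1 : ℝ)) *ᵥ x) = (∑ i, x i) ^ 2 := by
  have hJ : (of fun _ _ => (1 : ℝ) : Matrix ι ι ℝ) = vecMulVec 1 1 := by ext; simp [vecMulVec]
  rw [hJ, dotProduct_vecMulVec_mulVec, dotProduct_one, one_dotProduct, sq]

end Matrix

theorem stmt17_general (n : ℕ) (p q lam : ℝ)
    (σ : Fin n → ℝ)
    (E A : Matrix (Fin n) (Fin n) ℝ)
    (hAdef : A = E + ((p - q) / 2) • (Matrix.of fun i j => σ i * σ j)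
      + ((p + q) / 2) • (Matrix.of fun _ _ => (1 : ℝ))
      - p • (1 : Matrix (Fin n) (Fin n) ℝ))
    (d : Fin n → ℝ)
    (hlam : (p + q) / 2 ≤ lam)
    (S : Matrix (Fin n) (Fin n) ℝ)
    (hS : S = Matrix.diagonal d - A + lam • (Matrix.of fun _ _ => (1 : ℝ))) :
    ∀ x : Fin n → ℝ, (∑ i, (x i) ^ 2) = 1 → x ⬝ᵥ σ = 0 →
      (⨅ i, d i) + p - ‖Matrix.toEuclideanCLM (𝕜 := ℝ) E‖ ≤ x ⬝ᵥ (S *ᵥ x) := by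
  intro x hx hxσ
  have hxx : x ⬝ᵥ x = 1 := by simpa only [dotProduct, sq] using hx
  -- On σ⊥ the planted part `σσᵀ` vanishes and the `J` terms combine to `(λ - (p+q)/2) (∑ xᵢ)² ≥ 0`.
  have hquad : x ⬝ᵥ (S *ᵥ x) = x ⬝ᵥ (diagonal d *ᵥ x) - x ⬝ᵥ (E *ᵥ x) + p
      + (lam - (p + q) / 2) * (∑ i, x i) ^ 2 := by
    have hσσ : x ⬝ᵥ ((of fun i j => σ i * σ j) *ᵥ x) = 0 := by
      rw [show (of fun i j => σ i * σ j) = vecMulVec σ σ from rfl, dotProduct_vecMulVec_mulVec,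
        hxσ, zero_mul]
    rw [hS, hAdef]
    simp only [add_mulVec, sub_mulVec, smul_mulVec, one_mulVec, dotProduct_add, dotProduct_sub,
      dotProduct_smul, smul_eq_mul, hσσ, dotProduct_of_one_mulVec, hxx]
    ring
  have hdiag := iInf_mul_le_dotProduct_diagonal_mulVec d x
  have hE := dotProduct_mulVec_le_norm_toEuclideanCLM_mul E x
  rw [hxx, mul_one] at hdiag hE
  rw [hquad]
  linarith [mul_nonneg (sub_nonneg.2 hlam) (sq_nonneg (∑ i, x i))]

theorem stmt17 (n : ℕ) [NeZero n] (p q lam : ℝ)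
    (σ : Fin n → ℝ) (hσ : ∀ i, σ i = 1 ∨ σ i = -1) (hsum : ∑ i, σ i = 0)
    (E A : Matrix (Fin n) (Fin n) ℝ) (hE : E.IsSymm)
    (hAdef : A = E + ((p - q) / 2) • (Matrix.of fun i j => σ i * σ j)
      + ((p + q) / 2) • (Matrix.of fun _ _ => (1 : ℝ))
      - p • (1 : Matrix (Fin n) (Fin n) ℝ))
    (d : Fin n → ℝ) (hd : ∀ i, d i = ∑ j, A i j * σ i * σ j)
    (hlam : (p + q) / 2 ≤ lam)
    (S : Matrix (Fin n) (Fin n) ℝ)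
    (hS : S = Matrix.diagonal d - A + lam • (Matrix.of fun _ _ => (1 : ℝ))) :
    ∀ x : Fin n → ℝ, (∑ i, (x i) ^ 2) = 1 → x ⬝ᵥ σ = 0 →
      (⨅ i, d i) + p - ‖Matrix.toEuclideanCLM (𝕜 := ℝ) E‖ ≤ x ⬝ᵥ (S *ᵥ x) :=
  stmt17_general n p q lam σ E A hAdef d hlam S hS
end
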